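/- Let n ∈ ℕ₀, j ∈ {0,1}, and λ ∈ B_j(n). Then there exist integers γ_ν (ν ∈ ℕ₀²) such that (i) x^{λ1}·y^{λ2} = Σ_ν γ_ν·Q_ν(x,y) in ℤ[x,y], and (ii) m_{λ,n}(s,t) = Σ_ν γ_ν·m_{ν,n}(s,t)·P_ν(s,t) in ℤ[s,t], where γ_ν = 0 unless |ν| ≤ |λ| and ν ∈ B_j(n). -/
import Mathlib
set_option maxHeartbeats 1000000
set_option synthInstance.maxHeartbeats 400000


open MvPolynomial

noncomputable section

abbrev Rxy : Type := MvPolynomial (Fin 2) ℤ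

/-- The fraction field of ℤ[x,y]. -/
abbrev Kxy : Type := FractionRing Rxy

/-- The image of `x` in the fraction field. -/
noncomputable def xx : Kxy := algebraMap Rxy Kxy (X 0)

/-- The image of `y` in the fraction field. -/
noncomputable def yy : Kxy := algebraMap Rxy Kxy (X 1)

/-- `s = x / y²`. -/
noncomputable def sv : Kxy := xx / yy ^ 2

/-- `t = y / x²`. -/
noncomputable def tv : Kxy := yy / xx ^ 2

/-- Evaluation of a two-variable integer polynomial at `(s, t)` in the fraction field. -/
noncomputable def evST (p : Rxy) : Kxy := aeval ![sv, tv] p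

/-- Defining properties of the SU(3) character polynomials `Q a b`
(with the convention `Q a b = 0` whenever `(a, b) ∉ ℕ₀²`). -/
def IsQSU3 (Q : ℤ → ℤ → Rxy) : Prop :=
  (∀ a b : ℤ, (a < 0 ∨ b < 0) → Q a b = 0) ∧
  Q 0 0 = 1 ∧
  Q 1 0 = X 0 ∧
  (∀ a b : ℤ, 0 ≤ a → 0 ≤ b →
    X 0 * Q a b = Q (a + 1) b + Q a (b - 1) + Q (a - 1) (b + 1)) ∧
  (∀ a b : ℤ, rename (Equiv.swap (0 : Fin 2) 1) (Q a b) = Q b a)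

/-- Defining property of the polynomials `P a b` (in the variables `s, t`), namely
`P_λ(x/y², y/x²) = x^{-λ₁} y^{-λ₂} Q_λ(x,y)` in the fraction field of ℤ[x,y]
(with the convention `P a b = 0` whenever `(a, b) ∉ ℕ₀²`). -/
def IsPSU3 (Q P : ℤ → ℤ → Rxy) : Prop :=
  (∀ a b : ℤ, (a < 0 ∨ b < 0) → P a b = 0) ∧
  (∀ a b : ℤ, 0 ≤ a → 0 ≤ b →
    evST (P a b) = algebraMap Rxy Kxy (Q a b) / (xx ^ a * yy ^ b))

/-- Membership of `p` in the set `B_j(n)` (for `j = 0, 1`). -/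
def Bmem (j n : ℕ) (p : ℕ × ℕ) : Prop :=
  ((p.1 : ℤ) - j ≡ (p.2 : ℤ) [ZMOD 3]) ∧
  (p.1 : ℤ) - j + 2 * p.2 ≤ 3 * n ∧
  2 * ((p.1 : ℤ) - j) + p.2 ≤ 3 * n

/-- Defining property of the monomials `m_{λ,n}(s,t)`: for `λ ∈ B_j(n)` (`j = 0, 1`),
`m j λ n` is the element of ℤ[s,t] corresponding to `x^{λ₁-j-n} y^{λ₂-n}` under the
change of variables `s = x/y²`, `t = y/x²`. -/
def IsMono (m : ℕ → ℕ × ℕ → ℕ → Rxy) : Prop :=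
  ∀ j n (p : ℕ × ℕ), j ≤ 1 → Bmem j n p →
    evST (m j p n) = xx ^ ((p.1 : ℤ) - j - n) * yy ^ ((p.2 : ℤ) - n)


lemma algMap_inj : Function.Injective (algebraMap Rxy Kxy) :=
  IsFractionRing.injective Rxy Kxy

lemma xx_ne : xx ≠ 0 := by
  simp only [xx, ne_eq, ← (algebraMap Rxy Kxy).map_zero]
  intro h
  exact (X_ne_zero (0 : Fin 2)) (algMap_inj h)

lemma yy_ne : yy ≠ 0 := by
  simp only [yy, ne_eq, ← (algebraMap Rxy Kxy).map_zero]
  intro h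
  exact (X_ne_zero (1 : Fin 2)) (algMap_inj h)

lemma term_eq (d a b : ℕ) (ha : a ≤ d) (hb : b ≤ d) :
    (xx * yy) ^ (2 * d) * (sv ^ a * tv ^ b) =
      xx ^ (2 * d + a - 2 * b) * yy ^ (2 * d + b - 2 * a) := by
  have h1 : sv ^ a = xx ^ a / yy ^ (2 * a) := by
    rw [sv, div_pow, ← pow_mul]
  have h2 : tv ^ b = yy ^ b / xx ^ (2 * b) := by
    rw [tv, div_pow, ← pow_mul]
  have e1 : 2 * d + a - 2 * b + 2 * b = 2 * d + a := by omega
  have e2 : 2 * d + b - 2 * a + 2 * a = 2 * d + b := by omega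
  rw [h1, h2, div_mul_div_comm, ← mul_div_assoc,
    div_eq_iff (mul_ne_zero (pow_ne_zero _ yy_ne) (pow_ne_zero _ xx_ne)), mul_pow]
  calc xx ^ (2 * d) * yy ^ (2 * d) * (xx ^ a * yy ^ b)
      = xx ^ (2 * d + a) * yy ^ (2 * d + b) := by rw [pow_add, pow_add]; ring
    _ = xx ^ (2 * d + a - 2 * b + 2 * b) * yy ^ (2 * d + b - 2 * a + 2 * a) := by
        rw [e1, e2]
    _ = xx ^ (2 * d + a - 2 * b) * yy ^ (2 * d + b - 2 * a) * (yy ^ (2 * a) * xx ^ (2 * b)) := by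
        rw [pow_add, pow_add]; ring

lemma evST_zero {F : Rxy} (h : evST F = 0) : F = 0 := by
  by_contra hF
  set d := F.totalDegree with hd
  have hbound : ∀ mo ∈ F.support, mo 0 ≤ d ∧ mo 1 ≤ d := by
    intro mo hmo
    have h2 := le_totalDegree hmo
    rw [Finsupp.sum_fintype _ _ (fun _ => rfl), Fin.sum_univ_two] at h2
    omega
  set E : (Fin 2 →₀ ℕ) → (Fin 2 →₀ ℕ) := fun mo =>
    Finsupp.single 0 (2 * d + mo 0 - 2 * mo 1) + Finsupp.single 1 (2 * d + mo 1 - 2 * mo 0)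
    with hE
  set G : Rxy := ∑ mo ∈ F.support, monomial (E mo) (coeff mo F) with hGdef
  have hG : algebraMap Rxy Kxy G = (xx * yy) ^ (2 * d) * evST F := by
    rw [evST, aeval_def, eval₂_eq', hGdef, map_sum, Finset.mul_sum]
    refine Finset.sum_congr rfl fun mo hmo => ?_
    obtain ⟨h0, h1⟩ := hbound mo hmo
    have hmono : (algebraMap Rxy Kxy) (monomial (E mo) (coeff mo F)) =
        algebraMap ℤ Kxy (coeff mo F) * (xx ^ (2 * d + mo 0 - 2 * mo 1) * yy ^ (2 * d + mo 1 - 2 * mo 0)) := by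
      rw [monomial_eq, hE]
      rw [Finsupp.prod_fintype _ _ (fun i => pow_zero _), Fin.prod_univ_two]
      simp only [Finsupp.add_apply, Finsupp.single_apply, if_pos rfl,
        one_ne_zero, if_neg (by decide : ¬((1:Fin 2) = 0)), if_neg (by decide : ¬((0:Fin 2) = 1)),
        add_zero, zero_add]
      rw [map_mul, map_mul, map_pow, map_pow]
      rw [IsScalarTower.algebraMap_apply ℤ Rxy Kxy, MvPolynomial.algebraMap_eq]
      rfl
    rw [hmono, ← term_eq d _ _ h0 h1, Fin.prod_univ_two]
    simp only [Matrix.cons_val_zero, Matrix.cons_val_one, Matrix.head_cons]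
    ring
  rw [h, mul_zero] at hG
  have hG0 : G = 0 := algMap_inj (by rw [hG, map_zero])
  obtain ⟨mo, hmo⟩ := (support_nonempty.mpr hF : F.support.Nonempty)
  have hc : coeff (E mo) G = coeff mo F := by
    rw [hGdef, coeff_sum]
    rw [Finset.sum_eq_single_of_mem mo hmo]
    · rw [coeff_monomial, if_pos rfl]
    · intro m' hm' hne
      rw [coeff_monomial, if_neg]
      intro heq
      apply hne
      obtain ⟨g0, g1⟩ := hbound m' hm'
      obtain ⟨f0, f1⟩ := hbound mo hmo
      have e0 := DFunLike.congr_fun heq 0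
      have e1 := DFunLike.congr_fun heq 1
      simp only [hE, Finsupp.add_apply, Finsupp.single_apply, if_pos rfl] at e0 e1
      norm_num at e0 e1
      ext i
      fin_cases i
      · show m' 0 = mo 0; omega
      · show m' 1 = mo 1; omega
  rw [hG0, coeff_zero] at hc
  exact (mem_support_iff.mp hmo) hc.symm

lemma evST_inj : Function.Injective evST := by
  intro a b hab
  have h0 : evST (a - b) = 0 := by
    simp only [evST, map_sub] at hab ⊢
    rw [hab, sub_self]
  have := evST_zero h0
  exact sub_eq_zero.mp this

lemma sum_range_trim {M : Type*} [AddCommMonoid M] (g : ℕ → M) (N K K' : ℕ)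
    (h : ∀ i, N ≤ i → g i = 0) (hK : N ≤ K) (hK' : N ≤ K') :
    ∑ i ∈ Finset.range K, g i = ∑ i ∈ Finset.range K', g i := by
  have base : ∀ K₀, N ≤ K₀ → ∑ i ∈ Finset.range K₀, g i = ∑ i ∈ Finset.range N, g i := by
    intro K₀ hK₀
    rw [← Finset.sum_subset (Finset.range_subset_range.mpr hK₀)]
    intro i _ hi
    exact h i (by simpa using hi)
  rw [base K hK, base K' hK']

lemma recY {Q : ℤ → ℤ → Rxy} (hQ : IsQSU3 Q) (a b : ℤ) (ha : 0 ≤ a) (hb : 0 ≤ b) :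
    X 1 * Q a b = Q a (b + 1) + Q (a - 1) b + Q (a + 1) (b - 1) := by
  have h := hQ.2.2.2.1 b a hb ha
  have h2 := congrArg (rename (Equiv.swap (0 : Fin 2) 1)) h
  rw [map_mul, map_add, map_add, rename_X, Equiv.swap_apply_left,
    hQ.2.2.2.2, hQ.2.2.2.2, hQ.2.2.2.2, hQ.2.2.2.2] at h2
  exact h2

def Cone (a b : ℕ) (ν : ℕ × ℕ) : Prop :=
  (ν.1 : ℤ) + 2 * ν.2 ≤ a + 2 * b ∧ 2 * (ν.1 : ℤ) + ν.2 ≤ 2 * a + b ∧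
    ((ν.1 : ℤ) - ν.2) % 3 = ((a : ℤ) - b) % 3

lemma stepX {Q : ℤ → ℤ → Rxy} (hQ : IsQSU3 Q) (a b : ℕ) (γ : ℕ × ℕ → ℤ)
    (hs : ∀ ν, γ ν ≠ 0 → Cone a b ν)
    (he : (X 0 : Rxy) ^ a * X 1 ^ b =
      ∑ ν ∈ Finset.range (a + b + 1) ×ˢ Finset.range (a + b + 1), γ ν • Q ν.1 ν.2) :
    ∃ γ' : ℕ × ℕ → ℤ, (∀ ν, γ' ν ≠ 0 → Cone (a + 1) b ν) ∧
      (X 0 : Rxy) ^ (a + 1) * X 1 ^ b =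
        ∑ ν ∈ Finset.range (a + b + 2) ×ˢ Finset.range (a + b + 2), γ' ν • Q ν.1 ν.2 := by
  classical
  have hγbd : ∀ i j : ℕ, γ (i, j) ≠ 0 → i + j ≤ a + b := by
    intro i j hij
    obtain ⟨d1, d2, _⟩ := hs _ hij
    simp only at d1 d2
    omega
  refine ⟨fun μ => (if 1 ≤ μ.1 then γ (μ.1 - 1, μ.2) else 0) + γ (μ.1, μ.2 + 1) +
      (if 1 ≤ μ.2 then γ (μ.1 + 1, μ.2 - 1) else 0), ?_, ?_⟩
  · intro ν hν
    have hν' : (if 1 ≤ ν.1 then γ (ν.1 - 1, ν.2) else 0) + γ (ν.1, ν.2 + 1) +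
        (if 1 ≤ ν.2 then γ (ν.1 + 1, ν.2 - 1) else 0) ≠ 0 := hν
    by_cases c1 : (if 1 ≤ ν.1 then γ (ν.1 - 1, ν.2) else 0) ≠ 0
    · rw [ne_eq, ite_eq_right_iff, not_forall] at c1
      obtain ⟨h1, c1⟩ := c1
      obtain ⟨d1, d2, d3⟩ := hs _ c1
      simp only at d1 d2 d3
      exact ⟨by omega, by omega, by omega⟩
    by_cases c2 : γ (ν.1, ν.2 + 1) ≠ 0
    · obtain ⟨d1, d2, d3⟩ := hs _ c2
      simp only at d1 d2 d3
      exact ⟨by omega, by omega, by omega⟩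
    by_cases c3 : (if 1 ≤ ν.2 then γ (ν.1 + 1, ν.2 - 1) else 0) ≠ 0
    · rw [ne_eq, ite_eq_right_iff, not_forall] at c3
      obtain ⟨h3, c3⟩ := c3
      obtain ⟨d1, d2, d3⟩ := hs _ c3
      simp only at d1 d2 d3
      exact ⟨by omega, by omega, by omega⟩
    · push_neg at c1 c2 c3
      rw [c1, c2, c3] at hν'
      simp at hν'
  · have lhs_eq : (X 0 : Rxy) ^ (a + 1) * X 1 ^ b =
        (∑ ν ∈ Finset.range (a + b + 1) ×ˢ Finset.range (a + b + 1),
          γ ν • Q ((ν.1 : ℤ) + 1) ν.2) +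
        (∑ ν ∈ Finset.range (a + b + 1) ×ˢ Finset.range (a + b + 1),
          γ ν • Q (ν.1 : ℤ) ((ν.2 : ℤ) - 1)) +
        (∑ ν ∈ Finset.range (a + b + 1) ×ˢ Finset.range (a + b + 1),
          γ ν • Q ((ν.1 : ℤ) - 1) ((ν.2 : ℤ) + 1)) := by
      have hstep : (X 0 : Rxy) ^ (a + 1) * X 1 ^ b = X 0 * ((X 0 : Rxy) ^ a * X 1 ^ b) := by ring
      rw [hstep, he, Finset.mul_sum, ← Finset.sum_add_distrib, ← Finset.sum_add_distrib]
      refine Finset.sum_congr rfl fun ν _ => ?_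
      rw [mul_smul_comm, hQ.2.2.2.1 ν.1 ν.2 (Int.natCast_nonneg _) (Int.natCast_nonneg _),
        smul_add, smul_add]
    have rhs_eq : ∑ ν ∈ Finset.range (a + b + 2) ×ˢ Finset.range (a + b + 2),
        ((if 1 ≤ ν.1 then γ (ν.1 - 1, ν.2) else 0) + γ (ν.1, ν.2 + 1) +
          (if 1 ≤ ν.2 then γ (ν.1 + 1, ν.2 - 1) else 0)) • Q ν.1 ν.2 =
        (∑ ν ∈ Finset.range (a + b + 2) ×ˢ Finset.range (a + b + 2),
          (if 1 ≤ ν.1 then γ (ν.1 - 1, ν.2) else 0) • Q (ν.1 : ℤ) ν.2) +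
        (∑ ν ∈ Finset.range (a + b + 2) ×ˢ Finset.range (a + b + 2),
          γ (ν.1, ν.2 + 1) • Q (ν.1 : ℤ) ν.2) +
        (∑ ν ∈ Finset.range (a + b + 2) ×ˢ Finset.range (a + b + 2),
          (if 1 ≤ ν.2 then γ (ν.1 + 1, ν.2 - 1) else 0) • Q (ν.1 : ℤ) ν.2) := by
      rw [← Finset.sum_add_distrib, ← Finset.sum_add_distrib]
      exact Finset.sum_congr rfl fun ν _ => by rw [add_smul, add_smul]
    have e1 : ∑ i ∈ Finset.range ((a + b + 1) + 1), ∑ j ∈ Finset.range ((a + b + 1) + 1),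
        (if 1 ≤ i then γ (i - 1, j) else 0) • Q (i : ℤ) (j : ℤ) =
        ∑ i ∈ Finset.range (a + b + 1), ∑ j ∈ Finset.range (a + b + 1),
          γ (i, j) • Q ((i : ℤ) + 1) (j : ℤ) := by
      rw [Finset.sum_range_succ']
      have hz : (∑ j ∈ Finset.range ((a + b + 1) + 1),
          (if 1 ≤ (0 : ℕ) then γ (0 - 1, j) else 0) • Q ((0 : ℕ) : ℤ) (j : ℤ)) = 0 := by
        simp
      rw [hz, add_zero]
      refine Finset.sum_congr rfl fun i _ => ?_
      have hterm : ∀ j : ℕ, (if 1 ≤ i + 1 then γ (i + 1 - 1, j) else 0) • Q ((i + 1 : ℕ) : ℤ) (j : ℤ)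
          = γ (i, j) • Q ((i : ℤ) + 1) (j : ℤ) := by
        intro j
        rw [if_pos (by omega)]
        norm_num
      rw [Finset.sum_congr rfl fun j _ => hterm j]
      refine sum_range_trim _ (a + b + 1) ((a + b + 1) + 1) (a + b + 1) ?_ (by omega) le_rfl
      intro j hj
      rcases eq_or_ne (γ (i, j)) 0 with h | h
      · rw [h, zero_smul]
      · exact absurd (hγbd i j h) (by omega)
    have e2 : ∑ i ∈ Finset.range (a + b + 2), ∑ j ∈ Finset.range (a + b + 2),
        γ (i, j + 1) • Q (i : ℤ) (j : ℤ) =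
        ∑ i ∈ Finset.range (a + b + 1), ∑ j ∈ Finset.range (a + b + 1),
          γ (i, j) • Q (i : ℤ) ((j : ℤ) - 1) := by
      have h2a : ∑ i ∈ Finset.range (a + b + 1), ∑ j ∈ Finset.range (a + b + 1),
          γ (i, j) • Q (i : ℤ) ((j : ℤ) - 1) =
          ∑ i ∈ Finset.range (a + b + 1), ∑ j ∈ Finset.range (a + b),
            γ (i, j + 1) • Q (i : ℤ) (j : ℤ) := by
        refine Finset.sum_congr rfl fun i _ => ?_
        rw [Finset.sum_range_succ']
        have hz : γ (i, 0) • Q (i : ℤ) (((0 : ℕ) : ℤ) - 1) = 0 := by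
          rw [hQ.1 _ _ (Or.inr (by norm_num)), smul_zero]
        rw [hz, add_zero]
        refine Finset.sum_congr rfl fun j _ => ?_
        norm_num
      have h2b : ∑ i ∈ Finset.range (a + b + 2), ∑ j ∈ Finset.range (a + b + 2),
          γ (i, j + 1) • Q (i : ℤ) (j : ℤ) =
          ∑ i ∈ Finset.range (a + b + 1), ∑ j ∈ Finset.range (a + b),
            γ (i, j + 1) • Q (i : ℤ) (j : ℤ) := by
        refine (sum_range_trim _ (a + b + 1) (a + b + 2) (a + b + 1) ?_ (by omega) le_rfl).trans ?_
        · intro i hi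
          refine Finset.sum_eq_zero fun j _ => ?_
          rcases eq_or_ne (γ (i, j + 1)) 0 with h | h
          · rw [h, zero_smul]
          · exact absurd (hγbd i (j + 1) h) (by omega)
        · refine Finset.sum_congr rfl fun i _ => ?_
          refine sum_range_trim _ (a + b) (a + b + 2) (a + b) ?_ (by omega) le_rfl
          intro j hj
          rcases eq_or_ne (γ (i, j + 1)) 0 with h | h
          · rw [h, zero_smul]
          · exact absurd (hγbd i (j + 1) h) (by omega)
      exact h2b.trans h2a.symm
    have e3 : ∑ i ∈ Finset.range (a + b + 2), ∑ j ∈ Finset.range ((a + b + 1) + 1),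
        (if 1 ≤ j then γ (i + 1, j - 1) else 0) • Q (i : ℤ) (j : ℤ) =
        ∑ i ∈ Finset.range (a + b + 1), ∑ j ∈ Finset.range (a + b + 1),
          γ (i, j) • Q ((i : ℤ) - 1) ((j : ℤ) + 1) := by
      have h3a : ∑ i ∈ Finset.range (a + b + 1), ∑ j ∈ Finset.range (a + b + 1),
          γ (i, j) • Q ((i : ℤ) - 1) ((j : ℤ) + 1) =
          ∑ i ∈ Finset.range (a + b), ∑ j ∈ Finset.range (a + b + 1),
            γ (i + 1, j) • Q (i : ℤ) ((j : ℤ) + 1) := by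
        rw [Finset.sum_range_succ']
        have hz : ∑ j ∈ Finset.range (a + b + 1),
            γ (0, j) • Q (((0 : ℕ) : ℤ) - 1) ((j : ℤ) + 1) = 0 := by
          refine Finset.sum_eq_zero fun j _ => ?_
          rw [hQ.1 _ _ (Or.inl (by norm_num)), smul_zero]
        rw [hz, add_zero]
        refine Finset.sum_congr rfl fun i _ => Finset.sum_congr rfl fun j _ => ?_
        norm_num
      have h3b : ∑ i ∈ Finset.range (a + b + 2), ∑ j ∈ Finset.range ((a + b + 1) + 1),
          (if 1 ≤ j then γ (i + 1, j - 1) else 0) • Q (i : ℤ) (j : ℤ) =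
          ∑ i ∈ Finset.range (a + b), ∑ j ∈ Finset.range (a + b + 1),
            γ (i + 1, j) • Q (i : ℤ) ((j : ℤ) + 1) := by
        have hinner : ∀ i : ℕ, ∑ j ∈ Finset.range ((a + b + 1) + 1),
            (if 1 ≤ j then γ (i + 1, j - 1) else 0) • Q (i : ℤ) (j : ℤ) =
            ∑ j ∈ Finset.range (a + b + 1), γ (i + 1, j) • Q (i : ℤ) ((j : ℤ) + 1) := by
          intro i
          rw [Finset.sum_range_succ']
          have hz : (if 1 ≤ (0 : ℕ) then γ (i + 1, 0 - 1) else 0) • Q (i : ℤ) ((0 : ℕ) : ℤ) = 0 := by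
            simp
          rw [hz, add_zero]
          refine Finset.sum_congr rfl fun j _ => ?_
          rw [if_pos (by omega)]
          norm_num
        rw [Finset.sum_congr rfl fun i _ => hinner i]
        refine sum_range_trim _ (a + b) (a + b + 2) (a + b) ?_ (by omega) le_rfl
        intro i hi
        refine Finset.sum_eq_zero fun j _ => ?_
        rcases eq_or_ne (γ (i + 1, j)) 0 with h | h
        · rw [h, zero_smul]
        · exact absurd (hγbd (i + 1) j h) (by omega)
      exact h3b.trans h3a.symm
    rw [lhs_eq, rhs_eq]
    simp only [Finset.sum_product]
    congr 1
    congr 1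
    · exact e1.symm
    · exact e2.symm
    · exact e3.symm

lemma stepY {Q : ℤ → ℤ → Rxy} (hQ : IsQSU3 Q) (a b : ℕ) (γ : ℕ × ℕ → ℤ)
    (hs : ∀ ν, γ ν ≠ 0 → Cone a b ν)
    (he : (X 0 : Rxy) ^ a * X 1 ^ b =
      ∑ ν ∈ Finset.range (a + b + 1) ×ˢ Finset.range (a + b + 1), γ ν • Q ν.1 ν.2) :
    ∃ γ' : ℕ × ℕ → ℤ, (∀ ν, γ' ν ≠ 0 → Cone a (b + 1) ν) ∧
      (X 0 : Rxy) ^ a * X 1 ^ (b + 1) =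
        ∑ ν ∈ Finset.range (a + b + 2) ×ˢ Finset.range (a + b + 2), γ' ν • Q ν.1 ν.2 := by
  classical
  have hγbd : ∀ i j : ℕ, γ (i, j) ≠ 0 → i + j ≤ a + b := by
    intro i j hij
    obtain ⟨d1, d2, _⟩ := hs _ hij
    simp only at d1 d2
    omega
  refine ⟨fun μ => (if 1 ≤ μ.2 then γ (μ.1, μ.2 - 1) else 0) + γ (μ.1 + 1, μ.2) +
      (if 1 ≤ μ.1 then γ (μ.1 - 1, μ.2 + 1) else 0), ?_, ?_⟩
  · intro ν hν
    have hν' : (if 1 ≤ ν.2 then γ (ν.1, ν.2 - 1) else 0) + γ (ν.1 + 1, ν.2) +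
        (if 1 ≤ ν.1 then γ (ν.1 - 1, ν.2 + 1) else 0) ≠ 0 := hν
    by_cases c1 : (if 1 ≤ ν.2 then γ (ν.1, ν.2 - 1) else 0) ≠ 0
    · rw [ne_eq, ite_eq_right_iff, not_forall] at c1
      obtain ⟨h1, c1⟩ := c1
      obtain ⟨d1, d2, d3⟩ := hs _ c1
      simp only at d1 d2 d3
      exact ⟨by omega, by omega, by omega⟩
    by_cases c2 : γ (ν.1 + 1, ν.2) ≠ 0
    · obtain ⟨d1, d2, d3⟩ := hs _ c2
      simp only at d1 d2 d3
      exact ⟨by omega, by omega, by omega⟩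
    by_cases c3 : (if 1 ≤ ν.1 then γ (ν.1 - 1, ν.2 + 1) else 0) ≠ 0
    · rw [ne_eq, ite_eq_right_iff, not_forall] at c3
      obtain ⟨h3, c3⟩ := c3
      obtain ⟨d1, d2, d3⟩ := hs _ c3
      simp only at d1 d2 d3
      exact ⟨by omega, by omega, by omega⟩
    · push_neg at c1 c2 c3
      rw [c1, c2, c3] at hν'
      simp at hν'
  · have lhs_eq : (X 0 : Rxy) ^ a * X 1 ^ (b + 1) =
        (∑ ν ∈ Finset.range (a + b + 1) ×ˢ Finset.range (a + b + 1),
          γ ν • Q (ν.1 : ℤ) ((ν.2 : ℤ) + 1)) +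
        (∑ ν ∈ Finset.range (a + b + 1) ×ˢ Finset.range (a + b + 1),
          γ ν • Q ((ν.1 : ℤ) - 1) (ν.2 : ℤ)) +
        (∑ ν ∈ Finset.range (a + b + 1) ×ˢ Finset.range (a + b + 1),
          γ ν • Q ((ν.1 : ℤ) + 1) ((ν.2 : ℤ) - 1)) := by
      have hstep : (X 0 : Rxy) ^ a * X 1 ^ (b + 1) = X 1 * ((X 0 : Rxy) ^ a * X 1 ^ b) := by ring
      rw [hstep, he, Finset.mul_sum, ← Finset.sum_add_distrib, ← Finset.sum_add_distrib]
      refine Finset.sum_congr rfl fun ν _ => ?_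
      rw [mul_smul_comm, recY hQ ν.1 ν.2 (Int.natCast_nonneg _) (Int.natCast_nonneg _),
        smul_add, smul_add]
    have rhs_eq : ∑ ν ∈ Finset.range (a + b + 2) ×ˢ Finset.range (a + b + 2),
        ((if 1 ≤ ν.2 then γ (ν.1, ν.2 - 1) else 0) + γ (ν.1 + 1, ν.2) +
          (if 1 ≤ ν.1 then γ (ν.1 - 1, ν.2 + 1) else 0)) • Q ν.1 ν.2 =
        (∑ ν ∈ Finset.range (a + b + 2) ×ˢ Finset.range (a + b + 2),
          (if 1 ≤ ν.2 then γ (ν.1, ν.2 - 1) else 0) • Q (ν.1 : ℤ) ν.2) +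
        (∑ ν ∈ Finset.range (a + b + 2) ×ˢ Finset.range (a + b + 2),
          γ (ν.1 + 1, ν.2) • Q (ν.1 : ℤ) ν.2) +
        (∑ ν ∈ Finset.range (a + b + 2) ×ˢ Finset.range (a + b + 2),
          (if 1 ≤ ν.1 then γ (ν.1 - 1, ν.2 + 1) else 0) • Q (ν.1 : ℤ) ν.2) := by
      rw [← Finset.sum_add_distrib, ← Finset.sum_add_distrib]
      exact Finset.sum_congr rfl fun ν _ => by rw [add_smul, add_smul]
    have e1 : ∑ i ∈ Finset.range (a + b + 2), ∑ j ∈ Finset.range ((a + b + 1) + 1),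
        (if 1 ≤ j then γ (i, j - 1) else 0) • Q (i : ℤ) (j : ℤ) =
        ∑ i ∈ Finset.range (a + b + 1), ∑ j ∈ Finset.range (a + b + 1),
          γ (i, j) • Q (i : ℤ) ((j : ℤ) + 1) := by
      have hinner : ∀ i : ℕ, ∑ j ∈ Finset.range ((a + b + 1) + 1),
          (if 1 ≤ j then γ (i, j - 1) else 0) • Q (i : ℤ) (j : ℤ) =
          ∑ j ∈ Finset.range (a + b + 1), γ (i, j) • Q (i : ℤ) ((j : ℤ) + 1) := by
        intro i
        rw [Finset.sum_range_succ']
        have hz : (if 1 ≤ (0 : ℕ) then γ (i, 0 - 1) else 0) • Q (i : ℤ) ((0 : ℕ) : ℤ) = 0 := by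
          simp
        rw [hz, add_zero]
        refine Finset.sum_congr rfl fun j _ => ?_
        rw [if_pos (by omega)]
        norm_num
      rw [Finset.sum_congr rfl fun i _ => hinner i]
      refine sum_range_trim _ (a + b + 1) (a + b + 2) (a + b + 1) ?_ (by omega) le_rfl
      intro i hi
      refine Finset.sum_eq_zero fun j _ => ?_
      rcases eq_or_ne (γ (i, j)) 0 with h | h
      · rw [h, zero_smul]
      · exact absurd (hγbd i j h) (by omega)
    have e2 : ∑ i ∈ Finset.range (a + b + 2), ∑ j ∈ Finset.range (a + b + 2),
        γ (i + 1, j) • Q (i : ℤ) (j : ℤ) =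
        ∑ i ∈ Finset.range (a + b + 1), ∑ j ∈ Finset.range (a + b + 1),
          γ (i, j) • Q ((i : ℤ) - 1) (j : ℤ) := by
      have h2a : ∑ i ∈ Finset.range (a + b + 1), ∑ j ∈ Finset.range (a + b + 1),
          γ (i, j) • Q ((i : ℤ) - 1) (j : ℤ) =
          ∑ i ∈ Finset.range (a + b), ∑ j ∈ Finset.range (a + b + 1),
            γ (i + 1, j) • Q (i : ℤ) (j : ℤ) := by
        rw [Finset.sum_range_succ']
        have hz : ∑ j ∈ Finset.range (a + b + 1),
            γ (0, j) • Q (((0 : ℕ) : ℤ) - 1) (j : ℤ) = 0 := by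
          refine Finset.sum_eq_zero fun j _ => ?_
          rw [hQ.1 _ _ (Or.inl (by norm_num)), smul_zero]
        rw [hz, add_zero]
        refine Finset.sum_congr rfl fun i _ => Finset.sum_congr rfl fun j _ => ?_
        norm_num
      have h2b : ∑ i ∈ Finset.range (a + b + 2), ∑ j ∈ Finset.range (a + b + 2),
          γ (i + 1, j) • Q (i : ℤ) (j : ℤ) =
          ∑ i ∈ Finset.range (a + b), ∑ j ∈ Finset.range (a + b + 1),
            γ (i + 1, j) • Q (i : ℤ) (j : ℤ) := by
        refine (sum_range_trim _ (a + b) (a + b + 2) (a + b) ?_ (by omega) le_rfl).trans ?_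
        · intro i hi
          refine Finset.sum_eq_zero fun j _ => ?_
          rcases eq_or_ne (γ (i + 1, j)) 0 with h | h
          · rw [h, zero_smul]
          · exact absurd (hγbd (i + 1) j h) (by omega)
        · refine Finset.sum_congr rfl fun i _ => ?_
          refine sum_range_trim _ (a + b + 1) (a + b + 2) (a + b + 1) ?_ (by omega) le_rfl
          intro j hj
          rcases eq_or_ne (γ (i + 1, j)) 0 with h | h
          · rw [h, zero_smul]
          · exact absurd (hγbd (i + 1) j h) (by omega)
      exact h2b.trans h2a.symm
    have e3 : ∑ i ∈ Finset.range ((a + b + 1) + 1), ∑ j ∈ Finset.range (a + b + 2),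
        (if 1 ≤ i then γ (i - 1, j + 1) else 0) • Q (i : ℤ) (j : ℤ) =
        ∑ i ∈ Finset.range (a + b + 1), ∑ j ∈ Finset.range (a + b + 1),
          γ (i, j) • Q ((i : ℤ) + 1) ((j : ℤ) - 1) := by
      have h3a : ∑ i ∈ Finset.range (a + b + 1), ∑ j ∈ Finset.range (a + b + 1),
          γ (i, j) • Q ((i : ℤ) + 1) ((j : ℤ) - 1) =
          ∑ i ∈ Finset.range (a + b + 1), ∑ j ∈ Finset.range (a + b),
            γ (i, j + 1) • Q ((i : ℤ) + 1) (j : ℤ) := by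
        refine Finset.sum_congr rfl fun i _ => ?_
        rw [Finset.sum_range_succ']
        have hz : γ (i, 0) • Q ((i : ℤ) + 1) (((0 : ℕ) : ℤ) - 1) = 0 := by
          rw [hQ.1 _ _ (Or.inr (by norm_num)), smul_zero]
        rw [hz, add_zero]
        refine Finset.sum_congr rfl fun j _ => ?_
        norm_num
      have h3b : ∑ i ∈ Finset.range ((a + b + 1) + 1), ∑ j ∈ Finset.range (a + b + 2),
          (if 1 ≤ i then γ (i - 1, j + 1) else 0) • Q (i : ℤ) (j : ℤ) =
          ∑ i ∈ Finset.range (a + b + 1), ∑ j ∈ Finset.range (a + b),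
            γ (i, j + 1) • Q ((i : ℤ) + 1) (j : ℤ) := by
        rw [Finset.sum_range_succ']
        have hz : ∑ j ∈ Finset.range (a + b + 2),
            (if 1 ≤ (0 : ℕ) then γ (0 - 1, j + 1) else 0) • Q ((0 : ℕ) : ℤ) (j : ℤ) = 0 := by
          simp
        rw [hz, add_zero]
        refine Finset.sum_congr rfl fun i _ => ?_
        have hterm : ∀ j : ℕ, (if 1 ≤ i + 1 then γ (i + 1 - 1, j + 1) else 0) •
            Q ((i + 1 : ℕ) : ℤ) (j : ℤ) = γ (i, j + 1) • Q ((i : ℤ) + 1) (j : ℤ) := by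
          intro j
          rw [if_pos (by omega)]
          norm_num
        rw [Finset.sum_congr rfl fun j _ => hterm j]
        refine sum_range_trim _ (a + b) (a + b + 2) (a + b) ?_ (by omega) le_rfl
        intro j hj
        rcases eq_or_ne (γ (i, j + 1)) 0 with h | h
        · rw [h, zero_smul]
        · exact absurd (hγbd i (j + 1) h) (by omega)
      exact h3b.trans h3a.symm
    rw [lhs_eq, rhs_eq]
    simp only [Finset.sum_product]
    congr 1
    congr 1
    · exact e1.symm
    · exact e2.symm
    · exact e3.symm

lemma keyQ {Q : ℤ → ℤ → Rxy} (hQ : IsQSU3 Q) (a b : ℕ) :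
    ∃ γ : ℕ × ℕ → ℤ, (∀ ν, γ ν ≠ 0 → Cone a b ν) ∧
      (X 0 : Rxy) ^ a * X 1 ^ b =
        ∑ ν ∈ Finset.range (a + b + 1) ×ˢ Finset.range (a + b + 1), γ ν • Q ν.1 ν.2 := by
  classical
  suffices H : ∀ N a b : ℕ, a + b = N → ∃ γ : ℕ × ℕ → ℤ, (∀ ν, γ ν ≠ 0 → Cone a b ν) ∧
      (X 0 : Rxy) ^ a * X 1 ^ b =
        ∑ ν ∈ Finset.range (a + b + 1) ×ˢ Finset.range (a + b + 1), γ ν • Q ν.1 ν.2 by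
    exact H (a + b) a b rfl
  intro N
  induction N with
  | zero =>
    intro a b hab
    obtain ⟨rfl, rfl⟩ : a = 0 ∧ b = 0 := by omega
    refine ⟨fun ν => if ν = (0, 0) then 1 else 0, ?_, ?_⟩
    · intro ν hν
      have hν2 : (if ν = (0, 0) then (1 : ℤ) else 0) ≠ 0 := hν
      have : ν = (0, 0) := by
        by_contra h
        rw [if_neg h] at hν2
        exact hν2 rfl
      subst this
      exact ⟨by norm_num, by norm_num, by norm_num⟩
    · have : (Finset.range (0 + 0 + 1) ×ˢ Finset.range (0 + 0 + 1)) = {((0 : ℕ), (0 : ℕ))} := rfl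
      rw [this, Finset.sum_singleton]
      simp [hQ.2.1]
  | succ N ih =>
    intro a b hab
    rcases b with _ | b'
    · rcases a with _ | a'
      · omega
      · obtain ⟨γ, hs, he⟩ := ih a' 0 (by omega)
        obtain ⟨γ', hs', he'⟩ := stepX hQ a' 0 γ hs he
        refine ⟨γ', hs', ?_⟩
        have h1 : a' + 1 + 0 + 1 = a' + 0 + 2 := by omega
        rw [h1]
        exact he'
    · obtain ⟨γ, hs, he⟩ := ih a b' (by omega)
      obtain ⟨γ', hs', he'⟩ := stepY hQ a b' γ hs he
      refine ⟨γ', hs', ?_⟩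
      have h1 : a + (b' + 1) + 1 = a + b' + 2 := by omega
      rw [h1]
      exact he'

theorem stmt_8 (Q P : ℤ → ℤ → Rxy) (hQ : IsQSU3 Q) (hP : IsPSU3 Q P)
    (m : ℕ → ℕ × ℕ → ℕ → Rxy) (hm : IsMono m)
    (n j : ℕ) (hj : j ≤ 1) (p : ℕ × ℕ) (hp : Bmem j n p) :
    ∃ γ : ℕ × ℕ → ℤ,
      (∀ ν : ℕ × ℕ, γ ν ≠ 0 → ν.1 + ν.2 ≤ p.1 + p.2 ∧ Bmem j n ν) ∧
      (X 0 : Rxy) ^ p.1 * X 1 ^ p.2 =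
        ∑ ν ∈ Finset.range (p.1 + p.2 + 1) ×ˢ Finset.range (p.1 + p.2 + 1),
          γ ν • Q (ν.1 : ℤ) (ν.2 : ℤ) ∧
      m j p n =
        ∑ ν ∈ Finset.range (p.1 + p.2 + 1) ×ˢ Finset.range (p.1 + p.2 + 1),
          γ ν • (m j ν n * P (ν.1 : ℤ) (ν.2 : ℤ)) := by

  classical
  obtain ⟨γ, hs, he⟩ := keyQ hQ p.1 p.2
  have hBc : ∀ ν : ℕ × ℕ, γ ν ≠ 0 → ν.1 + ν.2 ≤ p.1 + p.2 ∧ Bmem j n ν := by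
    intro ν hν
    obtain ⟨d1, d2, d3⟩ := hs _ hν
    obtain ⟨m1, m2, m3⟩ := hp
    have m1' : ((p.1 : ℤ) - j) % 3 = (p.2 : ℤ) % 3 := m1
    refine ⟨by omega, ?_, by omega, by omega⟩
    show ((ν.1 : ℤ) - j) % 3 = (ν.2 : ℤ) % 3
    omega
  refine ⟨γ, hBc, he, ?_⟩
  apply evST_inj
  have hx := xx_ne
  have hy := yy_ne
  have hEv : evST (∑ ν ∈ Finset.range (p.1 + p.2 + 1) ×ˢ Finset.range (p.1 + p.2 + 1),
      γ ν • (m j ν n * P (ν.1 : ℤ) (ν.2 : ℤ))) =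
      ∑ ν ∈ Finset.range (p.1 + p.2 + 1) ×ˢ Finset.range (p.1 + p.2 + 1),
        γ ν • (evST (m j ν n) * evST (P (ν.1 : ℤ) (ν.2 : ℤ))) := by
    simp only [evST, map_sum, map_zsmul, map_mul]
  rw [hEv, hm j n p hj hp]
  have hterm : ∀ ν ∈ Finset.range (p.1 + p.2 + 1) ×ˢ Finset.range (p.1 + p.2 + 1),
      γ ν • (evST (m j ν n) * evST (P (ν.1 : ℤ) (ν.2 : ℤ))) =
      γ ν • (algebraMap Rxy Kxy (Q (ν.1 : ℤ) (ν.2 : ℤ)) *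
        (xx ^ (-(j : ℤ) - n) * yy ^ (-(n : ℤ)))) := by
    intro ν _
    rcases eq_or_ne (γ ν) 0 with h | h
    · rw [h]; simp
    · have hB := (hBc ν h).2
      rw [hm j n ν hj hB, hP.2 ν.1 ν.2 (Int.natCast_nonneg _) (Int.natCast_nonneg _)]
      congr 1
      set q := algebraMap Rxy Kxy (Q (ν.1 : ℤ) (ν.2 : ℤ)) with hq
      calc xx ^ ((ν.1 : ℤ) - j - n) * yy ^ ((ν.2 : ℤ) - n) * (q / (xx ^ (ν.1 : ℤ) * yy ^ (ν.2 : ℤ)))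
          = q * ((xx ^ ((ν.1 : ℤ) - j - n) / xx ^ (ν.1 : ℤ)) *
              (yy ^ ((ν.2 : ℤ) - n) / yy ^ (ν.2 : ℤ))) := by
            rw [div_eq_mul_inv, mul_inv, div_eq_mul_inv, div_eq_mul_inv]; ring
        _ = q * (xx ^ ((ν.1 : ℤ) - j - n - ν.1) * yy ^ ((ν.2 : ℤ) - n - ν.2)) := by
            rw [← zpow_sub₀ hx, ← zpow_sub₀ hy]
        _ = q * (xx ^ (-(j : ℤ) - n) * yy ^ (-(n : ℤ))) := by
            rw [show (ν.1 : ℤ) - j - n - ν.1 = -(j : ℤ) - n by ring,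
              show (ν.2 : ℤ) - n - ν.2 = -(n : ℤ) by ring]
  rw [Finset.sum_congr rfl hterm]
  have hfact : ∑ ν ∈ Finset.range (p.1 + p.2 + 1) ×ˢ Finset.range (p.1 + p.2 + 1),
      γ ν • (algebraMap Rxy Kxy (Q (ν.1 : ℤ) (ν.2 : ℤ)) * (xx ^ (-(j : ℤ) - n) * yy ^ (-(n : ℤ)))) =
      (∑ ν ∈ Finset.range (p.1 + p.2 + 1) ×ˢ Finset.range (p.1 + p.2 + 1),
        γ ν • algebraMap Rxy Kxy (Q (ν.1 : ℤ) (ν.2 : ℤ))) * (xx ^ (-(j : ℤ) - n) * yy ^ (-(n : ℤ))) := by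
    rw [Finset.sum_mul]
    exact Finset.sum_congr rfl fun ν _ => by rw [smul_mul_assoc]
  rw [hfact]
  have hsum : ∑ ν ∈ Finset.range (p.1 + p.2 + 1) ×ˢ Finset.range (p.1 + p.2 + 1),
      γ ν • algebraMap Rxy Kxy (Q (ν.1 : ℤ) (ν.2 : ℤ)) =
      algebraMap Rxy Kxy ((X 0 : Rxy) ^ p.1 * X 1 ^ p.2) := by
    rw [he, map_sum]
    exact Finset.sum_congr rfl fun ν _ => (map_zsmul (algebraMap Rxy Kxy) _ _).symm
  rw [hsum, map_mul, map_pow, map_pow]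
  rw [show (algebraMap Rxy Kxy (X 0)) = xx from rfl, show (algebraMap Rxy Kxy (X 1)) = yy from rfl]
  rw [← zpow_natCast xx p.1, ← zpow_natCast yy p.2]
  symm
  calc xx ^ ((p.1 : ℕ) : ℤ) * yy ^ ((p.2 : ℕ) : ℤ) * (xx ^ (-(j : ℤ) - n) * yy ^ (-(n : ℤ)))
      = (xx ^ ((p.1 : ℕ) : ℤ) * xx ^ (-(j : ℤ) - n)) * (yy ^ ((p.2 : ℕ) : ℤ) * yy ^ (-(n : ℤ))) := by
        ring
    _ = xx ^ (((p.1 : ℕ) : ℤ) + (-(j : ℤ) - n)) * yy ^ (((p.2 : ℕ) : ℤ) + (-(n : ℤ))) := by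
        rw [← zpow_add₀ hx, ← zpow_add₀ hy]
    _ = xx ^ ((p.1 : ℤ) - j - n) * yy ^ ((p.2 : ℤ) - n) := by
        rw [show ((p.1 : ℕ) : ℤ) + (-(j : ℤ) - n) = (p.1 : ℤ) - j - n by ring,
          show ((p.2 : ℕ) : ℤ) + (-(n : ℤ)) = (p.2 : ℤ) - n by ring]
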